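/- arXiv:2507.15065 — 2 statements merged into one kernel-verified Lean document; each statement's English description precedes it below -/
import Mathlib

section
/- Let H be Hermitian on ℂ^N, ψ a unit vector, E = ⟨ψ|H|ψ⟩, V = ⟨ψ|H²|ψ⟩ − E² > 0, and W = [H, |ψ⟩⟨ψ|]. Then for all real s, e^{sW}ψ = cos(s√V)·ψ + (sin(s√V)/√V)·Wψ. -/
/-!
On the plane spanned by `ψ` and `Wψ = Hψ - Eψ`, the commutator `W = [H, |ψ⟩⟨ψ|]` acts with
`W²ψ = -Vψ`. Hence `ψ ∓ (i/√V) Wψ` are eigenvectors of `W` with eigenvalues `±i√V`, and `e^{sW}`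
multiplies them by `e^{±is√V}`; recombining gives the cosine and sine.
-/

open scoped InnerProductSpace
open ContinuousLinearMap InnerProductSpace

theorem exp_apply_of_apply_eq_smul {𝕜 E : Type*} [RCLike 𝕜] [NormedAddCommGroup E]
    [NormedSpace 𝕜 E] [CompleteSpace E] {A : E →L[𝕜] E} {u : E} {μ : 𝕜} (hu : A u = μ • u) :
    NormedSpace.exp A u = NormedSpace.exp μ • u := by
  have hpow (n : ℕ) : (A ^ n) u = μ ^ n • u := by
    induction n with
    | zero => simp
    | succ n ih => rw [pow_succ', mul_apply_eq_comp, ih, map_smul, hu, smul_smul, pow_succ]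
  have hA := (NormedSpace.exp_series_hasSum_exp' (𝕂 := 𝕜) A).mapL (apply 𝕜 E u)
  have hμ := (NormedSpace.exp_series_hasSum_exp' (𝕂 := 𝕜) μ).smul_const u
  simp only [apply_apply, smul_apply, hpow, smul_smul, smul_eq_mul] at hA hμ
  exact hA.unique hμ

open Complex in
theorem exp_smul_apply_of_apply_apply_eq_neg_sq_smul {E : Type*} [NormedAddCommGroup E]
    [NormedSpace ℂ E] [CompleteSpace E] {A : E →L[ℂ] E} {v : E} {c : ℂ} (hc : c ≠ 0)
    (hv : A (A v) = -c ^ 2 • v) (t : ℂ) :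
    NormedSpace.exp (t • A) v = cos (t * c) • v + (sin (t * c) / c) • A v := by
  have hexp {u : E} {μ : ℂ} (hu : A u = μ • u) :
      NormedSpace.exp (t • A) u = cexp (t * μ) • u := by
    rw [exp_apply_of_apply_eq_smul (μ := t * μ) (by rw [smul_apply, hu, smul_smul]),
      exp_eq_exp_ℂ]
  have hplus : A (c • v - I • A v) = (c * I) • (c • v - I • A v) := by
    simp only [map_sub, map_smul, hv]
    linear_combination (norm := module) (c • I_sq) • A v
  have hminus : A (c • v + I • A v) = (-(c * I)) • (c • v + I • A v) := by
    simp only [map_add, map_smul, hv]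
    linear_combination (norm := module) (c • I_sq) • A v
  apply smul_right_injective E (mul_ne_zero two_ne_zero hc)
  calc (2 * c) • NormedSpace.exp (t • A) v
      = NormedSpace.exp (t • A) ((c • v - I • A v) + (c • v + I • A v)) := by
        rw [← map_smul]
        congr 1
        module
    _ = cexp (t * c * I) • (c • v - I • A v) + cexp (-(t * c) * I) • (c • v + I • A v) := by
        rw [map_add, hexp hplus, hexp hminus, show t * (c * I) = t * c * I by ring,
          show t * -(c * I) = -(t * c) * I by ring]
    _ = (c * (2 * cos (t * c))) • v + (2 * sin (t * c)) • A v := by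
        rw [two_cos, two_sin]
        module
    _ = (2 * c) • (cos (t * c) • v + (sin (t * c) / c) • A v) := by
        rw [smul_add, smul_smul, smul_smul]
        match_scalars <;> field_simp

section Commutator

variable {𝕜 F : Type*} [RCLike 𝕜] [NormedAddCommGroup F] [InnerProductSpace 𝕜 F]

theorem lie_rankOne_self_apply (T : F →L[𝕜] F) (ψ x : F) :
    ⁅T, rankOne 𝕜 ψ ψ⁆ x = ⟪ψ, x⟫_𝕜 • T ψ - ⟪ψ, T x⟫_𝕜 • ψ := by
  simp [Ring.lie_def]

theorem lie_rankOne_self_apply_apply_self (T : F →L[𝕜] F) {ψ : F} (hψ : ‖ψ‖ = 1) :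
    ⁅T, rankOne 𝕜 ψ ψ⁆ (⁅T, rankOne 𝕜 ψ ψ⁆ ψ) =
      -(⟪ψ, T (T ψ)⟫_𝕜 - ⟪ψ, T ψ⟫_𝕜 ^ 2) • ψ := by
  have hψψ : ⟪ψ, ψ⟫_𝕜 = 1 := by simp [inner_self_eq_norm_sq_to_K, hψ]
  simp only [lie_rankOne_self_apply, hψψ, one_smul, map_sub, map_smul]
  module

end Commutator

section Matrix

variable {𝕜 n : Type*} [RCLike 𝕜] [Fintype n] [DecidableEq n]

theorem Matrix.toEuclideanCLM_vecMulVec_star (x y : EuclideanSpace 𝕜 n) :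
    Matrix.toEuclideanCLM (𝕜 := 𝕜) (Matrix.vecMulVec x (star y)) = rankOne 𝕜 x y := by
  ext1 z
  rw [← symm_toEuclideanLin_rankOne]
  exact congr($(Matrix.toEuclideanLin.apply_symm_apply (rankOne 𝕜 x y).toLinearMap) z)

theorem Matrix.toEuclideanCLM_exp (A : Matrix n n 𝕜) :
    Matrix.toEuclideanCLM (𝕜 := 𝕜) (NormedSpace.exp A) =
      NormedSpace.exp (Matrix.toEuclideanCLM (𝕜 := 𝕜) A) :=
  open scoped Norms.Operator in
  NormedSpace.map_exp (Matrix.toEuclideanCLM (𝕜 := 𝕜) (n := n))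
    (LinearMap.continuous_of_finiteDimensional
      (Matrix.toEuclideanCLM (𝕜 := 𝕜) (n := n)).toAlgEquiv.toLinearMap) A

end Matrix

theorem exp_commutator_on_state_general (N : ℕ) (H : Matrix (Fin N) (Fin N) ℂ)
    (ψ : EuclideanSpace ℂ (Fin N)) (hψ : ‖ψ‖ = 1)
    (E V : ℝ)
    (hE : (E : ℂ) = ⟪ψ, Matrix.toEuclideanLin H ψ⟫_ℂ)
    (hV : (V : ℂ) = ⟪ψ, Matrix.toEuclideanLin (H * H) ψ⟫_ℂ - (E : ℂ) ^ 2)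
    (hVpos : 0 < V)
    (W : Matrix (Fin N) (Fin N) ℂ)
    (hW : W = H * Matrix.vecMulVec ψ (star ψ) - Matrix.vecMulVec ψ (star ψ) * H)
    (s : ℝ) :
    Matrix.toEuclideanLin (NormedSpace.exp ((s : ℂ) • W)) ψ =
      (Real.cos (s * Real.sqrt V) : ℂ) • ψ +
        ((Real.sin (s * Real.sqrt V) / Real.sqrt V : ℝ) : ℂ) •
          Matrix.toEuclideanLin W ψ := by
  set T := Matrix.toEuclideanCLM (𝕜 := ℂ) (n := Fin N)
  have hTW : T W = ⁅T H, rankOne ℂ ψ ψ⁆ := by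
    rw [hW, map_sub, map_mul, map_mul, Matrix.toEuclideanCLM_vecMulVec_star, Ring.lie_def]
  have hsqrt : ((Real.sqrt V : ℝ) : ℂ) ^ 2 = V := by
    exact_mod_cast Real.sq_sqrt hVpos.le
  have hTW_sq : T W (T W ψ) = -((Real.sqrt V : ℝ) : ℂ) ^ 2 • ψ := by
    rw [hTW, lie_rankOne_self_apply_apply_self _ hψ, hsqrt, hV, hE, ← mul_apply_eq_comp,
      ← map_mul]
    rfl
  have hsqrt_ne : ((Real.sqrt V : ℝ) : ℂ) ≠ 0 := by
    exact_mod_cast (Real.sqrt_pos.2 hVpos).ne'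
  calc Matrix.toEuclideanLin (NormedSpace.exp ((s : ℂ) • W)) ψ
      = NormedSpace.exp ((s : ℂ) • T W) ψ := by
        rw [← map_smul, ← Matrix.toEuclideanCLM_exp]
        rfl
    _ = _ := by
        rw [exp_smul_apply_of_apply_apply_eq_neg_sq_smul hsqrt_ne hTW_sq]
        push_cast
        rfl

theorem exp_commutator_on_state (N : ℕ) (H : Matrix (Fin N) (Fin N) ℂ)
    (hherm : H.IsHermitian) (ψ : EuclideanSpace ℂ (Fin N)) (hψ : ‖ψ‖ = 1)
    (E V : ℝ)
    (hE : (E : ℂ) = ⟪ψ, Matrix.toEuclideanLin H ψ⟫_ℂ)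
    (hV : (V : ℂ) = ⟪ψ, Matrix.toEuclideanLin (H * H) ψ⟫_ℂ - (E : ℂ) ^ 2)
    (hVpos : 0 < V)
    (W : Matrix (Fin N) (Fin N) ℂ)
    (hW : W = H * Matrix.vecMulVec ψ (star ψ) - Matrix.vecMulVec ψ (star ψ) * H)
    (s : ℝ) :
    Matrix.toEuclideanLin (NormedSpace.exp ((s : ℂ) • W)) ψ =
      (Real.cos (s * Real.sqrt V) : ℂ) • ψ +
        ((Real.sin (s * Real.sqrt V) / Real.sqrt V : ℝ) : ℂ) •
          Matrix.toEuclideanLin W ψ :=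
  exp_commutator_on_state_general N H ψ hψ E V hE hV hVpos W hW s
end

section
/- For all x ∈ [0, π/2), sin(2x)/(2x) ≥ |π/2 − x|/2, equivalently 1/sinc(2x) ≤ 2/|π/2 − x| where sinc(t) = sin(t)/t. -/
/-! The inequality is equivalent to `t (π - t) ≤ 4 sin t` for `t = 2x ∈ [0, π]`. Both sides are
symmetric under `t ↦ π - t`, so it suffices to take `t ≤ π/2`, where `sin t ≥ t - t³/6` reduces it
to the negativity of a convex quadratic, which is checked at the two endpoints. -/

noncomputable def sinc (t : ℝ) : ℝ := if t = 0 then 1 else Real.sin t / t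

open scoped Real

lemma mul_pi_sub_le_four_mul_sin_of_le_pi_div_two {t : ℝ} (h0 : 0 ≤ t) (h1 : t ≤ π / 2) :
    t * (π - t) ≤ 4 * Real.sin t := by
  have hcube := Real.sin_ge_sub_cube h0
  have hquad : 2 * t ^ 2 / 3 - t + π - 4 ≤ 0 := by
    nlinarith [mul_nonneg h0 (sub_nonneg.2 h1), Real.pi_lt_d2, Real.pi_gt_three]
  nlinarith [mul_nonneg h0 (neg_nonneg.2 hquad)]

lemma mul_pi_sub_le_four_mul_sin {t : ℝ} (h0 : 0 ≤ t) (h1 : t ≤ π) :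
    t * (π - t) ≤ 4 * Real.sin t := by
  rcases le_total t (π / 2) with h | h
  · exact mul_pi_sub_le_four_mul_sin_of_le_pi_div_two h0 h
  · have := mul_pi_sub_le_four_mul_sin_of_le_pi_div_two (t := π - t) (by linarith) (by linarith)
    rwa [Real.sin_pi_sub, sub_sub_cancel, mul_comm] at this

lemma pi_sub_div_four_le_sinc {t : ℝ} (h0 : 0 ≤ t) (h1 : t ≤ π) : (π - t) / 4 ≤ sinc t := by
  rcases h0.eq_or_lt with rfl | hpos
  · simp only [sinc, if_pos, sub_zero]
    linarith [Real.pi_lt_four]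
  · rw [sinc, if_neg hpos.ne', le_div_iff₀ hpos]
    linarith [mul_pi_sub_le_four_mul_sin h0 h1]

theorem sinc_lower_bound :
    ∀ x ∈ Set.Ico (0 : ℝ) (Real.pi / 2),
      sinc (2 * x) ≥ |Real.pi / 2 - x| / 2 := by
  rintro x ⟨hx0, hx1⟩
  rw [abs_of_pos (sub_pos.2 hx1)]
  calc (π / 2 - x) / 2 = (π - 2 * x) / 4 := by ring
    _ ≤ sinc (2 * x) := pi_sub_div_four_le_sinc (by linarith) (by linarith)
end
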